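/- arXiv:1104.5595 — 2 statements merged into one kernel-verified Lean document; each statement's English description precedes it below -/
import Mathlib

section
/- The target group obtained by factoring the progenitor 2^{⋆C(6,3)} : S₆ (with S₆ acting on the 3-element subsets of {1,…,6}) by the single relator (t_{123}·(3 4))³ is isomorphic to the Coxeter group of type E₆. -/
/-!
The simple reflections `s₀, s₂, s₃, s₄, s₅` of `E₆` form a chain of type `A₅`, and `s₁` is joined
to `s₃` only. Sending `s₁ ↦ t_{012}` and the chain to the adjacent transpositions
`(0 1), (1 2), (2 3), (3 4), (4 5)` respects the Coxeter relations: the transpositions other than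
`(2 3)` fix `{0, 1, 2}`, hence commute with `t_{012}`, and `(t_{012} (2 3))³` is the relator.
Conversely, the Coxeter presentation of `S₆` (a group generated by involutions satisfying the
relations of type `A_n` has at most `(n + 1)!` elements, by coset enumeration) turns the chain into
a homomorphism `S₆ → W(E₆)`, and `t_S` is sent to the conjugate of `s₁` by any permutation
carrying `{0, 1, 2}` to `S`. This is well defined because the stabiliser `S₃ × S₃` of `{0, 1, 2}`
is generated by transpositions whose images commute with `s₁`. Both composites fix the generators.
-/

open Monoid Pointwise

/-- The type of `k`-element subsets of `Fin n`. -/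
abbrev KSub (n k : ℕ) := {s : Finset (Fin n) // s.card = k}

/-- The free product of copies of `ℤ/2ℤ` indexed by the `k`-element subsets of `Fin n`. -/
abbrev FP (n k : ℕ) := Monoid.CoprodI (fun _ : KSub n k => Multiplicative (ZMod 2))

/-- The symmetric generator `t_S`. -/
def tFP {n k : ℕ} (S : KSub n k) : FP n k :=
  Monoid.CoprodI.of (i := S) (Multiplicative.ofAdd (1 : ZMod 2))

/-- The action of a permutation of `Fin n` on the `k`-element subsets. -/
instance KSub.instMulAction (n k : ℕ) : MulAction (Equiv.Perm (Fin n)) (KSub n k) where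
  smul σ S := ⟨σ • S.1, by rw [Finset.card_smul_finset]; exact S.2⟩
  one_smul S := Subtype.ext (one_smul _ S.1)
  mul_smul σ τ S := Subtype.ext (mul_smul σ τ S.1)

/-- The endomorphism of the free product induced by a permutation of `Fin n`. -/
def fpHom {n k : ℕ} (σ : Equiv.Perm (Fin n)) : FP n k →* FP n k :=
  Monoid.CoprodI.lift (fun S => Monoid.CoprodI.of (M := fun _ : KSub n k => Multiplicative (ZMod 2)) (i := σ • S))

lemma fpHom_comp {n k : ℕ} (σ τ : Equiv.Perm (Fin n)) :
    (fpHom (n := n) (k := k) σ).comp (fpHom τ) = fpHom (σ * τ) := by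
  apply Monoid.CoprodI.ext_hom
  intro S
  ext x
  simp [fpHom, Monoid.CoprodI.lift_of, mul_smul]

lemma fpHom_one {n k : ℕ} : fpHom (n := n) (k := k) 1 = MonoidHom.id _ := by
  apply Monoid.CoprodI.ext_hom
  intro S
  ext x
  simp [fpHom, Monoid.CoprodI.lift_of]

/-- The action of `Sym(Fin n)` on the free product, permuting the free factors. -/
def fpAut (n k : ℕ) : Equiv.Perm (Fin n) →* MulAut (FP n k) :=
  MonoidHom.mk' (fun σ =>
    { toFun := fpHom σ
      invFun := fpHom σ⁻¹
      left_inv := fun x => by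
        have h := fpHom_comp (n := n) (k := k) σ⁻¹ σ
        rw [inv_mul_cancel, fpHom_one] at h
        exact DFunLike.congr_fun h x
      right_inv := fun x => by
        have h := fpHom_comp (n := n) (k := k) σ σ⁻¹
        rw [mul_inv_cancel, fpHom_one] at h
        exact DFunLike.congr_fun h x
      map_mul' := map_mul _ })
    (fun σ τ => by
      ext x
      exact (DFunLike.congr_fun (fpHom_comp (n := n) (k := k) σ τ) x).symm)

/-- The progenitor `2^{⋆C(n,k)} : Sₙ`. -/
abbrev Progenitor (n k : ℕ) := FP n k ⋊[fpAut n k] Equiv.Perm (Fin n)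

/-- The target group: the quotient of the progenitor by the normal closure of the
single relator `(t_{S₀}·σ₀)³`. -/
abbrev TargetGroup (n k : ℕ) (S₀ : KSub n k) (σ₀ : Equiv.Perm (Fin n)) :=
  Progenitor n k ⧸ Subgroup.normalClosure
    {(SemidirectProduct.inl (tFP S₀) * SemidirectProduct.inr σ₀) ^ 3}

/-- The image in the target group of the symmetric generator `t_S`. -/
def tbar {n k : ℕ} (S₀ : KSub n k) (σ₀ : Equiv.Perm (Fin n)) (S : KSub n k) :
    TargetGroup n k S₀ σ₀ :=
  QuotientGroup.mk (SemidirectProduct.inl (tFP S))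

/-- The canonical map from the control group `Sₙ` to the target group. -/
def pbar {n k : ℕ} (S₀ : KSub n k) (σ₀ : Equiv.Perm (Fin n)) :
    Equiv.Perm (Fin n) →* TargetGroup n k S₀ σ₀ :=
  (QuotientGroup.mk' _).comp (SemidirectProduct.inr)

open Equiv

section InvolutionPairs

variable {G : Type*} [Group G] {a b : G}

lemma mul_mul_eq_of_mul_pow_three (ha : a * a = 1) (hb : b * b = 1) (h : (a * b) ^ 3 = 1) :
    a * b * a = b * a * b := by
  have hab : a * b * a * (b * a * b) = 1 := by
    rw [← h, pow_succ, pow_succ, pow_one]; simp only [mul_assoc]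
  rw [eq_inv_of_mul_eq_one_left hab, mul_inv_rev, mul_inv_rev, inv_eq_of_mul_eq_one_right ha,
    inv_eq_of_mul_eq_one_right hb, mul_assoc]

lemma commute_of_mul_pow_two (ha : a * a = 1) (hb : b * b = 1) (h : (a * b) ^ 2 = 1) :
    Commute a b := by
  have hab : a * b * (a * b) = 1 := by rw [← h, pow_two]
  rw [Commute, SemiconjBy, eq_inv_of_mul_eq_one_left hab, mul_inv_rev,
    inv_eq_of_mul_eq_one_right ha, inv_eq_of_mul_eq_one_right hb]

lemma mul_pow_eq_one_swap {n : ℕ} (h : (a * b) ^ n = 1) : (b * a) ^ n = 1 := by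
  have := mul_pow_mul a b n
  rwa [h, one_mul, left_eq_mul] at this

def zmodTwoHom (g : G) (hg : g * g = 1) : Multiplicative (ZMod 2) →* G :=
  AddMonoidHom.toMultiplicativeLeft <| ZMod.lift 2
    ⟨zmultiplesHom (Additive G) (Additive.ofMul g), by
      change Additive.ofMul (g ^ (2 : ℤ)) = Additive.ofMul 1
      rw [zpow_two, hg]⟩

lemma zmodTwoHom_ofAdd_one (g : G) (hg : g * g = 1) :
    zmodTwoHom g hg (Multiplicative.ofAdd 1) = g := by
  change Additive.toMul (ZMod.lift 2 _ ((1 : ℤ) : ZMod 2)) = g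
  rw [ZMod.lift_coe]
  simp

lemma zmodTwo_hom_ext {M : Type*} [Monoid M] {f g : Multiplicative (ZMod 2) →* M}
    (h : f (Multiplicative.ofAdd 1) = g (Multiplicative.ofAdd 1)) : f = g := by
  ext c
  obtain ⟨c, rfl⟩ := Multiplicative.ofAdd.surjective c
  fin_cases c
  · exact (map_one f).trans (map_one g).symm
  · exact h

end InvolutionPairs

namespace TypeA

variable {G : Type*} [Group G] {x : ℕ → G}

/-- `x (k - 1) * ⋯ * x i`, empty if `k ≤ i`. The right cosets of `closureBelow x k` in
`closureBelow x (k + 1)` are represented by the `k + 2` elements `descProd x i (k + 1)`,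
`i ≤ k + 1`, which is where the bound `(k + 1)!` on `closureBelow x k` comes from. -/
def descProd (x : ℕ → G) (i k : ℕ) : G := ((List.range' i (k - i)).map x).reverse.prod

lemma descProd_self (k : ℕ) : descProd x k k = 1 := by simp [descProd]

lemma descProd_add_one {i k : ℕ} (h : i ≤ k) : descProd x i (k + 1) = x k * descProd x i k := by
  rw [descProd, descProd, show k + 1 - i = k - i + 1 by omega, List.range'_1_concat]
  simp [show i + (k - i) = k by omega]

lemma descProd_mul_descProd {i j k : ℕ} (hij : i ≤ j) (hjk : j ≤ k) :
    descProd x j k * descProd x i j = descProd x i k := by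
  induction k, hjk using Nat.le_induction with
  | base => rw [descProd_self, one_mul]
  | succ k hjk ih => rw [descProd_add_one hjk, descProd_add_one (hij.trans hjk), mul_assoc, ih]

lemma descProd_mem {H : Subgroup G} {i k : ℕ} (hx : ∀ l, i ≤ l → l < k → x l ∈ H) :
    descProd x i k ∈ H := by
  refine H.list_prod_mem fun y hy => ?_
  simp only [List.mem_reverse, List.mem_map, List.mem_range'_1] at hy
  obtain ⟨l, ⟨hl, hlk⟩, rfl⟩ := hy
  exact hx l hl (by omega)

lemma commute_descProd {c : G} {i k : ℕ} (h : ∀ l, i ≤ l → l < k → Commute c (x l)) :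
    Commute c (descProd x i k) :=
  (Subgroup.mem_centralizer_singleton_iff.mp (descProd_mem (H := Subgroup.centralizer {c})
    fun l hl hlk => Subgroup.mem_centralizer_singleton_iff.mpr (h l hl hlk).eq.symm)).symm

def closureBelow (x : ℕ → G) (k : ℕ) : Subgroup G := Subgroup.closure (x '' Set.Iio k)

lemma closureBelow_mono {k l : ℕ} (h : k ≤ l) : closureBelow x k ≤ closureBelow x l :=
  Subgroup.closure_mono (Set.image_mono (Set.Iio_subset_Iio h))

lemma mem_closureBelow {j k : ℕ} (h : j < k) : x j ∈ closureBelow x k :=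
  Subgroup.subset_closure ⟨j, h, rfl⟩

lemma descProd_mem_closureBelow (i k : ℕ) : descProd x i k ∈ closureBelow x k :=
  descProd_mem fun _ _ hl => mem_closureBelow hl

lemma descProd_mul_self {i k : ℕ} (hx : x i * x i = 1) (h : i < k) :
    descProd x i k * x i = descProd x (i + 1) k := by
  rw [← descProd_mul_descProd (Nat.le_succ i) h, descProd_add_one le_rfl, descProd_self, mul_one,
    mul_assoc, hx, mul_one]

lemma descProd_add_one_mul {i k : ℕ} (h : i + 1 ≤ k) :
    descProd x (i + 1) k * x i = descProd x i k := by
  rw [← descProd_mul_descProd (Nat.le_succ i) h, descProd_add_one le_rfl, descProd_self, mul_one]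

section Relations

variable {m : ℕ} (hsq : ∀ j < m, x j * x j = 1)
  (hbr : ∀ j, j + 2 ≤ m → x j * x (j + 1) * x j = x (j + 1) * x j * x (j + 1))
  (hcm : ∀ i j, i + 2 ≤ j → j < m → Commute (x i) (x j))

include hcm in
lemma descProd_mul_of_lt {i j k : ℕ} (h : j + 2 ≤ i) (hk : k ≤ m) :
    descProd x i k * x j = x j * descProd x i k :=
  (commute_descProd fun l hl hlk => hcm j l (by omega) (by omega)).eq.symm

include hbr hcm in
lemma descProd_mul_of_gt {i j k : ℕ} (h : i ≤ j) (hj : j + 2 ≤ k) (hk : k ≤ m) :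
    descProd x i k * x (j + 1) = x j * descProd x i k := by
  have hsplit : descProd x i k = descProd x (j + 2) k * (x (j + 1) * x j) * descProd x i j := by
    rw [show x (j + 1) * x j = descProd x j (j + 2) by
        rw [descProd_add_one (by omega), descProd_add_one le_rfl, descProd_self, mul_one],
      descProd_mul_descProd (by omega) hj, descProd_mul_descProd h (by omega)]
  have hlow : Commute (x (j + 1)) (descProd x i j) :=
    commute_descProd fun l _ hl => (hcm l (j + 1) (by omega) (by omega)).symm
  have hhigh : Commute (x j) (descProd x (j + 2) k) :=
    commute_descProd fun l hl hlk => hcm j l hl (by omega)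
  rw [hsplit]
  calc descProd x (j + 2) k * (x (j + 1) * x j) * descProd x i j * x (j + 1)
      = descProd x (j + 2) k * (x (j + 1) * x j * x (j + 1)) * descProd x i j := by
        rw [mul_assoc _ (descProd x i j), ← hlow.eq]; group
    _ = descProd x (j + 2) k * x j * (x (j + 1) * x j) * descProd x i j := by
        rw [← hbr j (by omega)]; group
    _ = x j * (descProd x (j + 2) k * (x (j + 1) * x j) * descProd x i j) := by
        rw [← hhigh.eq]; group

include hsq hbr hcm in
lemma exists_descProd_mul_eq {i j k : ℕ} (hi : i ≤ k + 1) (hj : j < k + 1) (hk : k + 1 ≤ m) :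
    ∃ c ∈ closureBelow x k, ∃ i' ≤ k + 1,
      descProd x i (k + 1) * x j = c * descProd x i' (k + 1) := by
  rcases lt_trichotomy j i with hji | rfl | hij
  · obtain rfl | hji := eq_or_lt_of_le (Nat.succ_le_of_lt hji)
    · exact ⟨1, one_mem _, j, by omega, by rw [one_mul, descProd_add_one_mul hi]⟩
    · exact ⟨x j, mem_closureBelow (by omega), i, hi, descProd_mul_of_lt hcm hji hk⟩
  · exact ⟨1, one_mem _, j + 1, by omega, by rw [one_mul, descProd_mul_self (hsq j (by omega)) hj]⟩
  · obtain ⟨j, rfl⟩ := Nat.exists_eq_add_of_lt hij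
    refine ⟨x (i + j), mem_closureBelow (by omega), i, hi, ?_⟩
    exact descProd_mul_of_gt hbr hcm (by omega) (by omega) hk

include hsq hbr hcm in
lemma exists_eq_mul_descProd {k : ℕ} (hk : k + 1 ≤ m) {g : G} (hg : g ∈ closureBelow x (k + 1)) :
    ∃ h ∈ closureBelow x k, ∃ i ≤ k + 1, g = h * descProd x i (k + 1) := by
  have step : ∀ g, (∃ h ∈ closureBelow x k, ∃ i ≤ k + 1, g = h * descProd x i (k + 1)) →
      ∀ j < k + 1, ∃ h ∈ closureBelow x k, ∃ i ≤ k + 1, g * x j = h * descProd x i (k + 1) := by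
    rintro _ ⟨h, hh, i, hi, rfl⟩ j hj
    obtain ⟨c, hc, i', hi', heq⟩ := exists_descProd_mul_eq hsq hbr hcm hi hj hk
    exact ⟨h * c, mul_mem hh hc, i', hi', by rw [mul_assoc, heq, mul_assoc]⟩
  induction hg using Subgroup.closure_induction_right with
  | one => exact ⟨1, one_mem _, k + 1, le_rfl, by rw [descProd_self, one_mul]⟩
  | mul_right g _ y hy ih =>
    obtain ⟨j, hj, rfl⟩ := hy
    exact step g ih j hj
  | mul_inv_cancel g _ y hy ih =>
    obtain ⟨j, hj, rfl⟩ := hy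
    rw [inv_eq_of_mul_eq_one_right (hsq j (by simp at hj; omega))]
    exact step g ih j hj

include hsq hbr hcm in
lemma finite_closureBelow_and_card_le {k : ℕ} (hk : k ≤ m) :
    Finite (closureBelow x k) ∧ Nat.card (closureBelow x k) ≤ (k + 1).factorial := by
  induction k with
  | zero =>
    have : closureBelow x 0 = ⊥ := by simp [closureBelow]
    rw [this]
    exact ⟨inferInstance, by simp⟩
  | succ k ih =>
    obtain ⟨hfin, hcard⟩ := ih (by omega)
    have hsurj : Function.Surjective fun p : closureBelow x k × Fin (k + 2) =>
        (⟨p.1 * descProd x p.2 (k + 1), mul_mem (closureBelow_mono k.le_succ p.1.2)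
          (descProd_mem_closureBelow _ _)⟩ : closureBelow x (k + 1)) := by
      rintro ⟨g, hg⟩
      obtain ⟨h, hh, i, hi, rfl⟩ := exists_eq_mul_descProd hsq hbr hcm hk hg
      exact ⟨(⟨h, hh⟩, ⟨i, by omega⟩), rfl⟩
    refine ⟨Finite.of_surjective _ hsurj, ?_⟩
    calc Nat.card (closureBelow x (k + 1)) ≤ Nat.card (closureBelow x k × Fin (k + 2)) :=
          Nat.card_le_card_of_surjective _ hsurj
      _ = Nat.card (closureBelow x k) * (k + 2) := by simp [Nat.card_prod]
      _ ≤ (k + 1).factorial * (k + 2) := Nat.mul_le_mul_right _ hcard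
      _ = (k + 2).factorial := by rw [Nat.factorial_succ (k + 1)]; ring

end Relations

end TypeA

section SymmetricGroup

lemma swap_mul_swap_pow_three {α : Type*} [Fintype α] [DecidableEq α] {a b c : α}
    (hab : a ≠ b) (hac : a ≠ c) (hbc : b ≠ c) : (swap a b * swap a c) ^ 3 = 1 := by
  rw [← (Perm.isThreeCycle_swap_mul_swap_same hab hac hbc).orderOf, pow_orderOf_eq_one]

lemma swap_mul_swap_pow_two {α : Type*} [DecidableEq α] {a b c d : α}
    (h : [a, b, c, d].Nodup) : (swap a b * swap c d) ^ 2 = 1 := by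
  rw [(Perm.disjoint_swap_swap h).commute.mul_pow, pow_two, pow_two, swap_mul_self, swap_mul_self,
    one_mul]

variable {n : ℕ}

def adjSwap (n : ℕ) (i : Fin n) : Perm (Fin (n + 1)) := swap i.castSucc i.succ

lemma isLiftable_adjSwap : (CoxeterMatrix.A n).IsLiftable (adjSwap n) := by
  intro i j
  change (adjSwap n i * adjSwap n j) ^
    (if i = j then 1 else if (j : ℕ) + 1 = i ∨ (i : ℕ) + 1 = j then 3 else 2) = 1
  simp only [adjSwap]
  split_ifs with hij hadj
  · rw [hij, pow_one, swap_mul_self]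
  · rcases hadj with h | h
    · rw [show i.castSucc = j.succ from Fin.ext (by simp [h]), swap_comm j.castSucc]
      exact swap_mul_swap_pow_three (by simp [Fin.ext_iff]; omega) (by simp [Fin.ext_iff])
        (by simp [Fin.ext_iff]; omega)
    · rw [show j.castSucc = i.succ from Fin.ext (by simp [h]), swap_comm i.castSucc]
      exact swap_mul_swap_pow_three (by simp [Fin.ext_iff]) (by simp [Fin.ext_iff]; omega)
        (by simp [Fin.ext_iff]; omega)
  · rw [Fin.ext_iff] at hij
    exact swap_mul_swap_pow_two (by simp [Fin.ext_iff]; omega)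

lemma Equiv.Perm.hom_ext_adjSwap {M : Type*} [Monoid M] {f g : Perm (Fin (n + 1)) →* M}
    (h : ∀ i, f (adjSwap n i) = g (adjSwap n i)) : f = g :=
  MonoidHom.eq_of_eqOn_denseM (Perm.mclosure_swap_castSucc_succ n) (by rintro _ ⟨i, rfl⟩; exact h i)

end SymmetricGroup

namespace CoxeterSystem

section

variable {B W : Type*} [Group W] {M : CoxeterMatrix B} (cs : CoxeterSystem M W) {i j : B}

lemma commute_simple_of_eq_two (h : M i j = 2) : Commute (cs.simple i) (cs.simple j) :=
  commute_of_mul_pow_two (cs.simple_mul_simple_self i) (cs.simple_mul_simple_self j)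
    (h ▸ cs.simple_mul_simple_pow i j)

lemma simple_braid_of_eq_three (h : M i j = 3) :
    cs.simple i * cs.simple j * cs.simple i = cs.simple j * cs.simple i * cs.simple j :=
  mul_mul_eq_of_mul_pow_three (cs.simple_mul_simple_self i) (cs.simple_mul_simple_self j)
    (h ▸ cs.simple_mul_simple_pow i j)

end

variable {n : ℕ} {W : Type*} [Group W] (cs : CoxeterSystem (CoxeterMatrix.A n) W)

def simpleOfNat (j : ℕ) : W := if h : j < n then cs.simple ⟨j, h⟩ else 1

lemma simpleOfNat_of_lt {j : ℕ} (h : j < n) : cs.simpleOfNat j = cs.simple ⟨j, h⟩ := dif_pos h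

lemma closureBelow_simpleOfNat : TypeA.closureBelow cs.simpleOfNat n = ⊤ := by
  rw [TypeA.closureBelow, ← cs.subgroup_closure_range_simple]
  congr 1
  ext w
  constructor
  · rintro ⟨j, hj, rfl⟩
    exact ⟨⟨j, hj⟩, (cs.simpleOfNat_of_lt hj).symm⟩
  · rintro ⟨i, rfl⟩
    exact ⟨i, i.isLt, cs.simpleOfNat_of_lt i.isLt⟩

include cs in
lemma finite_and_card_le_factorial : Finite W ∧ Nat.card W ≤ (n + 1).factorial := by
  have hsq : ∀ j < n, cs.simpleOfNat j * cs.simpleOfNat j = 1 := fun j hj => by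
    rw [cs.simpleOfNat_of_lt hj, cs.simple_mul_simple_self]
  have hbr : ∀ j, j + 2 ≤ n → cs.simpleOfNat j * cs.simpleOfNat (j + 1) * cs.simpleOfNat j =
      cs.simpleOfNat (j + 1) * cs.simpleOfNat j * cs.simpleOfNat (j + 1) := fun j hj => by
    rw [cs.simpleOfNat_of_lt (by omega), cs.simpleOfNat_of_lt hj]
    exact cs.simple_braid_of_eq_three (by simp [CoxeterMatrix.A, Fin.ext_iff])
  have hcm : ∀ i j, i + 2 ≤ j → j < n → Commute (cs.simpleOfNat i) (cs.simpleOfNat j) :=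
    fun i j hij hj => by
    rw [cs.simpleOfNat_of_lt (by omega), cs.simpleOfNat_of_lt hj]
    have hne : i ≠ j ∧ ¬(j + 1 = i ∨ i + 1 = j) := by omega
    exact cs.commute_simple_of_eq_two (by simp [CoxeterMatrix.A, Fin.ext_iff, hne])
  obtain ⟨hfin, hcard⟩ := TypeA.finite_closureBelow_and_card_le hsq hbr hcm le_rfl
  rw [closureBelow_simpleOfNat] at hfin hcard
  exact ⟨Finite.of_equiv _ Subgroup.topEquiv.toEquiv, Subgroup.card_top (G := W) ▸ hcard⟩

def toPerm : W →* Perm (Fin (n + 1)) := cs.lift ⟨adjSwap n, isLiftable_adjSwap⟩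

lemma toPerm_simple (i : Fin n) : cs.toPerm (cs.simple i) = adjSwap n i :=
  cs.lift_apply_simple isLiftable_adjSwap i

lemma toPerm_surjective : Function.Surjective cs.toPerm := by
  rw [← MonoidHom.range_eq_top, eq_top_iff,
    ← Subgroup.closure_eq_top_of_mclosure_eq_top (Perm.mclosure_swap_castSucc_succ n),
    Subgroup.closure_le]
  rintro _ ⟨i, rfl⟩
  exact ⟨cs.simple i, cs.toPerm_simple i⟩

lemma toPerm_bijective : Function.Bijective cs.toPerm := by
  obtain ⟨_, hcard⟩ := cs.finite_and_card_le_factorial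
  refine (Nat.bijective_iff_surjective_and_card _).mpr ⟨cs.toPerm_surjective, le_antisymm ?_ ?_⟩
  · simpa [Nat.card_perm, Fintype.card_perm] using hcard
  · exact Nat.card_le_card_of_surjective _ cs.toPerm_surjective

noncomputable def permEquiv : W ≃* Perm (Fin (n + 1)) :=
  MulEquiv.ofBijective cs.toPerm cs.toPerm_bijective

end CoxeterSystem

noncomputable def Equiv.Perm.liftOfIsLiftable {n : ℕ} {G : Type*} [Group G] (f : Fin n → G)
    (hf : (CoxeterMatrix.A n).IsLiftable f) : Perm (Fin (n + 1)) →* G :=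
  ((CoxeterMatrix.A n).toCoxeterSystem.lift ⟨f, hf⟩).comp
    (CoxeterMatrix.A n).toCoxeterSystem.permEquiv.symm.toMonoidHom

lemma Equiv.Perm.liftOfIsLiftable_adjSwap {n : ℕ} {G : Type*} [Group G] (f : Fin n → G)
    (hf : (CoxeterMatrix.A n).IsLiftable f) (i : Fin n) :
    Perm.liftOfIsLiftable f hf (adjSwap n i) = f i := by
  have hsymm : (CoxeterMatrix.A n).toCoxeterSystem.permEquiv.symm (adjSwap n i) =
      (CoxeterMatrix.A n).toCoxeterSystem.simple i :=
    MulEquiv.symm_apply_eq _ |>.mpr ((CoxeterMatrix.A n).toCoxeterSystem.toPerm_simple i).symm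
  simp only [Perm.liftOfIsLiftable, MonoidHom.comp_apply, MulEquiv.coe_toMonoidHom, hsymm]
  exact CoxeterSystem.lift_apply_simple _ hf i

section Progenitor

open SemidirectProduct

variable {n k : ℕ}

instance KSub.isPretransitive : MulAction.IsPretransitive (Perm (Fin n)) (KSub n k) where
  exists_smul_eq S T := by
    obtain ⟨σ, hσ⟩ := (Set.powersetCard.isPretransitive (α := Fin n) (n := k)).exists_smul_eq
      ⟨S.1, S.2⟩ ⟨T.1, T.2⟩
    exact ⟨σ, Subtype.ext (congrArg Subtype.val hσ)⟩

variable {S₀ : KSub n k} {σ₀ : Perm (Fin n)}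

lemma fpAut_tFP (σ : Perm (Fin n)) (S : KSub n k) : fpAut n k σ (tFP S) = tFP (σ • S) :=
  Monoid.CoprodI.lift_of _ _

lemma pbar_mul_tbar_mul_inv (σ : Perm (Fin n)) (S : KSub n k) :
    pbar S₀ σ₀ σ * tbar S₀ σ₀ S * (pbar S₀ σ₀ σ)⁻¹ = tbar S₀ σ₀ (σ • S) := by
  rw [tbar, tbar, ← fpAut_tFP, inl_aut]
  simp only [pbar, MonoidHom.comp_apply, QuotientGroup.mk'_apply, QuotientGroup.mk_mul,
    QuotientGroup.mk_inv, map_inv]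

lemma tFP_mul_self (S : KSub n k) : tFP S * tFP S = 1 := by
  rw [tFP, ← map_mul, ← ofAdd_add, show (1 + 1 : ZMod 2) = 0 from rfl, ofAdd_zero, map_one]

lemma tbar_mul_self (S : KSub n k) : tbar S₀ σ₀ S * tbar S₀ σ₀ S = 1 := by
  rw [tbar, ← QuotientGroup.mk_mul, ← map_mul, tFP_mul_self, map_one, QuotientGroup.mk_one]

lemma tbar_mul_pbar_pow_three : (tbar S₀ σ₀ S₀ * pbar S₀ σ₀ σ₀) ^ 3 = 1 :=
  (QuotientGroup.eq_one_iff _).mpr (Subgroup.subset_normalClosure rfl)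

lemma tbar_mul_pbar_pow_two {σ : Perm (Fin n)} (hσ : σ • S₀ = S₀) (hσσ : σ * σ = 1) :
    (tbar S₀ σ₀ S₀ * pbar S₀ σ₀ σ) ^ 2 = 1 := by
  have hc : Commute (tbar S₀ σ₀ S₀) (pbar S₀ σ₀ σ) :=
    (mul_inv_eq_iff_eq_mul.mp ((pbar_mul_tbar_mul_inv σ S₀).trans (by rw [hσ]))).symm
  rw [hc.mul_pow, pow_two, pow_two, tbar_mul_self, ← map_mul, hσσ, map_one, one_mul]

end Progenitor

namespace TargetGroup

open SemidirectProduct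

variable {n k : ℕ} {S₀ : KSub n k} {σ₀ : Perm (Fin n)} {W : Type*} [Group W]
  {ψ : Perm (Fin n) →* W} {s : W}

lemma hom_ext {G : Type*} [Group G] {f g : TargetGroup n k S₀ σ₀ →* G}
    (ht : f (tbar S₀ σ₀ S₀) = g (tbar S₀ σ₀ S₀)) (hp : f.comp (pbar S₀ σ₀) = g.comp (pbar S₀ σ₀)) :
    f = g := by
  have htbar (S : KSub n k) : f (tbar S₀ σ₀ S) = g (tbar S₀ σ₀ S) := by
    obtain ⟨σ, rfl⟩ := MulAction.exists_smul_eq (Perm (Fin n)) S₀ S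
    rw [← pbar_mul_tbar_mul_inv, map_mul, map_mul, map_inv, map_mul, map_mul, map_inv, ht,
      ← MonoidHom.comp_apply f, hp, MonoidHom.comp_apply]
  refine QuotientGroup.monoidHom_ext _ (SemidirectProduct.hom_ext ?_ hp)
  exact Monoid.CoprodI.ext_hom _ _ fun S => zmodTwo_hom_ext (htbar S)

/-- The image of `t_S` under `TargetGroup.lift`; it does not depend on the choice of permutation
by `genImage_eq`. -/
noncomputable def genImage (ψ : Perm (Fin n) →* W) (s : W) (S₀ S : KSub n k) : W :=
  MulAut.conj (ψ (MulAction.exists_smul_eq (Perm (Fin n)) S₀ S).choose) s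

lemma genImage_eq (hstab : ∀ τ : Perm (Fin n), τ • S₀ = S₀ → Commute (ψ τ) s)
    {σ : Perm (Fin n)} {S : KSub n k} (hσ : σ • S₀ = S) :
    genImage ψ s S₀ S = MulAut.conj (ψ σ) s := by
  obtain hτ := (MulAction.exists_smul_eq (Perm (Fin n)) S₀ S).choose_spec
  set τ := (MulAction.exists_smul_eq (Perm (Fin n)) S₀ S).choose
  have hfix : (σ⁻¹ * τ) • S₀ = S₀ := by rw [mul_smul, hτ, ← hσ, inv_smul_smul]
  have hc := (hstab _ hfix).eq
  rw [map_mul, map_inv] at hc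
  calc genImage ψ s S₀ S = ψ σ * ((ψ σ)⁻¹ * ψ τ * s) * (ψ τ)⁻¹ := by
        change MulAut.conj (ψ τ) s = _
        rw [MulAut.conj_apply]; group
    _ = MulAut.conj (ψ σ) s := by rw [hc, MulAut.conj_apply]; group

variable (hs : s * s = 1) (hstab : ∀ τ : Perm (Fin n), τ • S₀ = S₀ → Commute (ψ τ) s)
  (hrel : (s * ψ σ₀) ^ 3 = 1)

include hstab in
lemma genImage_self : genImage ψ s S₀ S₀ = s := by
  rw [genImage_eq hstab (one_smul _ S₀), map_one, map_one, MulAut.one_apply]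

include hs in
lemma genImage_mul_self (S : KSub n k) : genImage ψ s S₀ S * genImage ψ s S₀ S = 1 := by
  rw [genImage, ← map_mul, hs, map_one]

include hstab in
lemma conj_genImage (σ : Perm (Fin n)) (S : KSub n k) :
    MulAut.conj (ψ σ) (genImage ψ s S₀ S) = genImage ψ s S₀ (σ • S) := by
  obtain ⟨τ, rfl⟩ := MulAction.exists_smul_eq (Perm (Fin n)) S₀ S
  rw [genImage_eq hstab rfl, genImage_eq hstab (mul_smul σ τ S₀), map_mul, map_mul,
    MulAut.mul_apply]

noncomputable def liftFreeProduct (ψ : Perm (Fin n) →* W) (S₀ : KSub n k) (hs : s * s = 1) :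
    FP n k →* W :=
  Monoid.CoprodI.lift fun S => zmodTwoHom (genImage ψ s S₀ S) (genImage_mul_self hs S)

lemma liftFreeProduct_tFP (S : KSub n k) :
    liftFreeProduct ψ S₀ hs (tFP S) = genImage ψ s S₀ S := by
  rw [liftFreeProduct, tFP, Monoid.CoprodI.lift_of, zmodTwoHom_ofAdd_one]

include hstab in
lemma liftFreeProduct_comp_fpAut (σ : Perm (Fin n)) :
    (liftFreeProduct ψ S₀ hs).comp (fpAut n k σ).toMonoidHom =
      (MulAut.conj (ψ σ)).toMonoidHom.comp (liftFreeProduct ψ S₀ hs) :=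
  Monoid.CoprodI.ext_hom _ _ fun S => zmodTwo_hom_ext <| by
    change liftFreeProduct ψ S₀ hs (fpAut n k σ (tFP S)) =
      MulAut.conj (ψ σ) (liftFreeProduct ψ S₀ hs (tFP S))
    rw [fpAut_tFP, liftFreeProduct_tFP, liftFreeProduct_tFP, conj_genImage hstab]

include hstab in
noncomputable def liftProgenitor : Progenitor n k →* W :=
  SemidirectProduct.lift (liftFreeProduct ψ S₀ hs) ψ (liftFreeProduct_comp_fpAut hs hstab)

include hstab hrel in
noncomputable def lift : TargetGroup n k S₀ σ₀ →* W :=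
  QuotientGroup.lift _ (liftProgenitor hs hstab) <| Subgroup.normalClosure_le_normal <| by
    rintro _ rfl
    rw [SetLike.mem_coe, MonoidHom.mem_ker, map_pow, map_mul, liftProgenitor, lift_inl, lift_inr,
      liftFreeProduct_tFP, genImage_self hstab, hrel]

lemma lift_tbar_self : lift hs hstab hrel (tbar S₀ σ₀ S₀) = s := by
  rw [lift, tbar, QuotientGroup.lift_mk, liftProgenitor, lift_inl, liftFreeProduct_tFP,
    genImage_self hstab]

lemma lift_comp_pbar : (lift hs hstab hrel).comp (pbar S₀ σ₀) = ψ := by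
  ext σ
  rw [MonoidHom.comp_apply, lift, pbar, MonoidHom.comp_apply, QuotientGroup.mk'_apply,
    QuotientGroup.lift_mk, liftProgenitor, lift_inr]

end TargetGroup

section E₆

open CoxeterMatrix

/-- In Mathlib's labelling of the `E₆` diagram, `0 - 2 - 3 - 4 - 5` is a chain of type `A₅` and
node `1` is attached to node `3`. -/
def e₆Chain : Fin 5 → Fin 6 := ![0, 2, 3, 4, 5]

lemma A_five_eq_E₆_e₆Chain (i j : Fin 5) :
    CoxeterMatrix.A 5 i j = E₆ (e₆Chain i) (e₆Chain j) := by
  fin_cases i <;> fin_cases j <;> rfl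

noncomputable def permToE₆ : Perm (Fin 6) →* E₆.Group :=
  Perm.liftOfIsLiftable (fun i => E₆.toCoxeterSystem.simple (e₆Chain i)) fun i j => by
    rw [A_five_eq_E₆_e₆Chain]
    exact E₆.toCoxeterSystem.simple_mul_simple_pow _ _

lemma permToE₆_adjSwap (i : Fin 5) :
    permToE₆ (adjSwap 5 i) = E₆.toCoxeterSystem.simple (e₆Chain i) :=
  Perm.liftOfIsLiftable_adjSwap _ _ i

def e₆Subset : KSub 6 3 := ⟨{0, 1, 2}, by decide⟩

/-- The stabiliser of `{0, 1, 2}` is `Sym {0, 1, 2} × Sym {3, 4, 5}`; these are its 36 elements as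
words in the adjacent transpositions. -/
def stabWords : List (List (Fin 5)) := do
  let a ← [[], [0], [1], [0, 1], [1, 0], [0, 1, 0]]
  let b ← [[], [3], [4], [3, 4], [4, 3], [3, 4, 3]]
  pure (a ++ b)

set_option maxRecDepth 100000 in
lemma exists_mem_stabWords_of_smul_eq : ∀ τ : Perm (Fin 6),
    τ • ({0, 1, 2} : Finset (Fin 6)) = {0, 1, 2} →
      ∃ w ∈ stabWords, τ = (w.map (adjSwap 5)).prod := by
  decide

lemma E₆_e₆Chain_one_of_mem_stabWords : ∀ w ∈ stabWords, ∀ i ∈ w, E₆ (e₆Chain i) 1 = 2 := by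
  decide

lemma commute_permToE₆_of_smul_eq {τ : Perm (Fin 6)} (h : τ • e₆Subset = e₆Subset) :
    Commute (permToE₆ τ) (E₆.toCoxeterSystem.simple 1) := by
  obtain ⟨w, hw, rfl⟩ := exists_mem_stabWords_of_smul_eq τ (congrArg Subtype.val h)
  rw [map_list_prod, List.map_map]
  refine Commute.list_prod_left _ _ fun g hg => ?_
  obtain ⟨i, hi, rfl⟩ := List.mem_map.mp hg
  rw [Function.comp_apply, permToE₆_adjSwap]
  exact E₆.toCoxeterSystem.commute_simple_of_eq_two (E₆_e₆Chain_one_of_mem_stabWords w hw i hi)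

abbrev TargetGroupE₆ := TargetGroup 6 3 e₆Subset (swap 2 3)

/-- Images of the simple reflections of `E₆` other than `1`; the entry at `1` is unused. -/
def e₆Perm : Fin 6 → Perm (Fin 6) :=
  ![adjSwap 5 0, 1, adjSwap 5 1, adjSwap 5 2, adjSwap 5 3, adjSwap 5 4]

noncomputable def e₆Gens (i : Fin 6) : TargetGroupE₆ :=
  if i = 1 then tbar _ _ e₆Subset else pbar _ _ (e₆Perm i)

lemma e₆Perm_mul_pow_E₆ : ∀ i j, i ≠ 1 → j ≠ 1 → (e₆Perm i * e₆Perm j) ^ E₆ i j = 1 := by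
  decide

lemma e₆Perm_fixes_e₆Subset_of_ne_three : ∀ j, j ≠ 1 → j ≠ 3 →
    e₆Perm j • e₆Subset = e₆Subset ∧ e₆Perm j * e₆Perm j = 1 ∧ E₆ 1 j = 2 := by
  decide

lemma isLiftable_e₆Gens : E₆.IsLiftable e₆Gens := by
  have hone : ∀ j, (e₆Gens 1 * e₆Gens j) ^ E₆ 1 j = 1 := by
    intro j
    by_cases hj1 : j = 1
    · subst hj1
      exact (pow_one _).trans (tbar_mul_self _)
    by_cases hj3 : j = 3
    · subst hj3
      rw [e₆Gens, e₆Gens, if_pos rfl, if_neg (by decide),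
        show e₆Perm 3 = swap 2 3 by decide]
      exact tbar_mul_pbar_pow_three
    obtain ⟨hfix, hinv, h2⟩ := e₆Perm_fixes_e₆Subset_of_ne_three j hj1 hj3
    rw [e₆Gens, e₆Gens, if_pos rfl, if_neg hj1, h2]
    exact tbar_mul_pbar_pow_two hfix hinv
  intro i j
  by_cases hi : i = 1
  · subst hi
    exact hone j
  by_cases hj : j = 1
  · subst hj
    rw [E₆.symmetric]
    exact mul_pow_eq_one_swap (hone i)
  rw [e₆Gens, e₆Gens, if_neg hi, if_neg hj, ← map_mul, ← map_pow, e₆Perm_mul_pow_E₆ i j hi hj,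
    map_one]

noncomputable def e₆ToTargetGroup : E₆.Group →* TargetGroupE₆ :=
  E₆.toCoxeterSystem.lift ⟨e₆Gens, isLiftable_e₆Gens⟩

noncomputable def targetGroupToE₆ : TargetGroupE₆ →* E₆.Group :=
  TargetGroup.lift (E₆.toCoxeterSystem.simple_mul_simple_self 1)
    (fun _ => commute_permToE₆_of_smul_eq) (by
      rw [show swap (2 : Fin 6) 3 = adjSwap 5 2 by decide, permToE₆_adjSwap]
      exact E₆.toCoxeterSystem.simple_mul_simple_pow 1 3)

lemma permToE₆_e₆Perm {i : Fin 6} (hi : i ≠ 1) :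
    permToE₆ (e₆Perm i) = E₆.toCoxeterSystem.simple i := by
  fin_cases i <;> first | exact absurd rfl hi | exact permToE₆_adjSwap _

lemma e₆Gens_e₆Chain (i : Fin 5) : e₆Gens (e₆Chain i) = pbar _ _ (adjSwap 5 i) := by
  fin_cases i <;> rfl

lemma targetGroupToE₆_comp_e₆ToTargetGroup :
    targetGroupToE₆.comp e₆ToTargetGroup = MonoidHom.id _ :=
  E₆.toCoxeterSystem.ext_simple fun i => by
    rw [MonoidHom.comp_apply, e₆ToTargetGroup, CoxeterSystem.lift_apply_simple, MonoidHom.id_apply,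
      e₆Gens]
    split_ifs with hi
    · subst hi
      exact TargetGroup.lift_tbar_self ..
    · rw [← MonoidHom.comp_apply, targetGroupToE₆, TargetGroup.lift_comp_pbar, permToE₆_e₆Perm hi]

lemma e₆ToTargetGroup_comp_targetGroupToE₆ :
    e₆ToTargetGroup.comp targetGroupToE₆ = MonoidHom.id _ := by
  refine TargetGroup.hom_ext ?_ ?_
  · rw [MonoidHom.comp_apply, targetGroupToE₆, TargetGroup.lift_tbar_self, e₆ToTargetGroup,
      CoxeterSystem.lift_apply_simple]
    rfl
  · rw [MonoidHom.comp_assoc, targetGroupToE₆, TargetGroup.lift_comp_pbar]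
    refine Perm.hom_ext_adjSwap fun i => ?_
    rw [MonoidHom.comp_apply, permToE₆_adjSwap, e₆ToTargetGroup, CoxeterSystem.lift_apply_simple,
      e₆Gens_e₆Chain]
    rfl

end E₆

/-- **Statement.** The target group obtained by factoring the progenitor
`2^{⋆C(6,3)} : S6` (with `S6` acting on the 3-element subsets of `{1,…,6}`) by the single
relator `(t_{123}·(3 4))³` is isomorphic to the Coxeter group of type E₆. -/
theorem targetGroup_E_iso_coxeterGroup_E₆ :
    Nonempty
      (TargetGroup 6 3 ⟨{0, 1, 2}, by decide⟩ (Equiv.swap 2 3) ≃*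
        (CoxeterMatrix.E₆).Group) :=
  ⟨MonoidHom.toMulEquiv targetGroupToE₆ e₆ToTargetGroup e₆ToTargetGroup_comp_targetGroupToE₆
    targetGroupToE₆_comp_e₆ToTargetGroup⟩
end

section
/- For every n ≥ 4, in the target group G_D(n), the identity t_{12}·t_{34} = ((2 3)(1 4))·t_{13}·t_{24} holds, where (2 3)(1 4) denotes the image in G_D(n) of the product of the transpositions (2 3) and (1 4) of Sym(Fin n). In particular the double cosets N·t_{12}t_{34}·N and N·t_{13}t_{24}·N coincide, where N is the image of Sym(Fin n) in G_D(n). -/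
/-!
Since `σ₀ = (2 3)` is an involution, the relator `(t₁₂ (2 3))³ = 1` says exactly that
`t₁₂ t₁₃ t₁₂ = (2 3)`. Conjugating by a permutation sending `1, 2, 3` to `a, b, c` gives
`t_{ab} t_{ac} t_{ab} = (b c)`, i.e. `t_{ab} t_{ac} = (b c) t_{ab}`, for all distinct `a, b, c`.
For distinct `a, b, c, d`, two uses of this rule and `(b c) t_{ac} (b c) = t_{ab}` turn
`t_{ab} t_{cd}` into `(b c)(a d) t_{ac} t_{bd}`; the double cosets then agree because
`(b c)(a d) ∈ N`.
-/
open Monoid Pointwise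

/-- The subset `{1, 2}` (0-based: `{0, 1}`) of `Fin n`. -/
def S12 (n : ℕ) (hn : 4 ≤ n) : KSub n 2 :=
  ⟨{⟨0, by omega⟩, ⟨1, by omega⟩}, Finset.card_pair (by simp [Fin.ext_iff])⟩

/-- The transposition `(2 3)` (0-based: `(1 2)`) of `Fin n`. -/
def σD (n : ℕ) (hn : 4 ≤ n) : Equiv.Perm (Fin n) :=
  Equiv.swap ⟨1, by omega⟩ ⟨2, by omega⟩

/-- The target group `G_D(n)`, obtained by factoring the progenitor `2^{⋆C(n,2)} : Sₙ`
by the single relator `(t_{12}·(2 3))³`. -/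
abbrev GD (n : ℕ) (hn : 4 ≤ n) := TargetGroup n 2 (S12 n hn) (σD n hn)

/-- The symmetric generator `t_{ij}` of `G_D(n)`. -/
def tD {n : ℕ} (hn : 4 ≤ n) (i j : Fin n) (h : i ≠ j) : GD n hn :=
  tbar (S12 n hn) (σD n hn) ⟨{i, j}, Finset.card_pair h⟩

/-- The canonical map from the control group `Sₙ` to `G_D(n)`. -/
def pD {n : ℕ} (hn : 4 ≤ n) : Equiv.Perm (Fin n) →* GD n hn :=
  pbar (S12 n hn) (σD n hn)

namespace TargetGroup

variable {n k : ℕ} {S₀ : KSub n k} {σ₀ : Equiv.Perm (Fin n)}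

lemma tFP_mul_self (S : KSub n k) : tFP S * tFP S = 1 := by
  rw [tFP, ← map_mul, ← ofAdd_add, ZModModule.add_self, ofAdd_zero, map_one]

lemma tbar_mul_self (S : KSub n k) : tbar S₀ σ₀ S * tbar S₀ σ₀ S = 1 := by
  rw [tbar, ← QuotientGroup.mk_mul, ← map_mul, tFP_mul_self, map_one, QuotientGroup.mk_one]

lemma fpAut_tFP (ρ : Equiv.Perm (Fin n)) (S : KSub n k) :
    fpAut n k ρ (tFP S) = tFP (ρ • S) :=
  Monoid.CoprodI.lift_of _ _

lemma pbar_mul_tbar_mul_inv (ρ : Equiv.Perm (Fin n)) (S : KSub n k) :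
    pbar S₀ σ₀ ρ * tbar S₀ σ₀ S * (pbar S₀ σ₀ ρ)⁻¹ = tbar S₀ σ₀ (ρ • S) := by
  rw [pbar, tbar, tbar, MonoidHom.comp_apply, QuotientGroup.mk'_apply, ← QuotientGroup.mk_inv,
    ← QuotientGroup.mk_mul, ← QuotientGroup.mk_mul, ← map_inv, ← SemidirectProduct.inl_aut,
    fpAut_tFP]

lemma tbar_mul_pbar_pow_three : (tbar S₀ σ₀ S₀ * pbar S₀ σ₀ σ₀) ^ 3 = 1 := by
  rw [tbar, pbar, MonoidHom.comp_apply, QuotientGroup.mk'_apply, ← QuotientGroup.mk_mul,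
    ← QuotientGroup.mk_pow, QuotientGroup.eq_one_iff]
  exact Subgroup.subset_normalClosure rfl

lemma tbar_mul_tbar_smul_mul_tbar (hσ₀ : σ₀ * σ₀ = 1) :
    tbar S₀ σ₀ S₀ * tbar S₀ σ₀ (σ₀ • S₀) * tbar S₀ σ₀ S₀ = pbar S₀ σ₀ σ₀ := by
  have hrel := tbar_mul_pbar_pow_three (S₀ := S₀) (σ₀ := σ₀)
  set t := tbar S₀ σ₀ S₀
  set p := pbar S₀ σ₀ σ₀
  have hp : p⁻¹ = p := inv_eq_of_mul_eq_one_right (by rw [← map_mul, hσ₀, map_one])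
  simp only [pow_three, ← mul_assoc] at hrel
  calc t * tbar S₀ σ₀ (σ₀ • S₀) * t = t * (p * t * p⁻¹) * t := by rw [pbar_mul_tbar_mul_inv]
    _ = t * p * t * p * t := by rw [hp]; group
    _ = p⁻¹ := eq_inv_of_mul_eq_one_left hrel
    _ = p := hp

end TargetGroup

section GD

variable {n : ℕ} (hn : 4 ≤ n)

lemma KSub.smul_pair (ρ : Equiv.Perm (Fin n)) {i j : Fin n} (h : i ≠ j) :
    ρ • (⟨{i, j}, Finset.card_pair h⟩ : KSub n 2) =
      ⟨{ρ i, ρ j}, Finset.card_pair (ρ.injective.ne h)⟩ :=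
  Subtype.ext (by
    show ρ • ({i, j} : Finset (Fin n)) = _
    simp [Finset.smul_finset_insert])

lemma tD_mul_self (i j : Fin n) (h : i ≠ j) : tD hn i j h * tD hn i j h = 1 :=
  TargetGroup.tbar_mul_self _

lemma tD_comm (i j : Fin n) (h : i ≠ j) : tD hn i j h = tD hn j i h.symm := by
  simp only [tD, Finset.pair_comm]

lemma pD_mul_tD_mul_inv (ρ : Equiv.Perm (Fin n)) (i j : Fin n) (h : i ≠ j) :
    pD hn ρ * tD hn i j h * (pD hn ρ)⁻¹ = tD hn (ρ i) (ρ j) (ρ.injective.ne h) := by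
  rw [pD, tD, TargetGroup.pbar_mul_tbar_mul_inv, KSub.smul_pair ρ h, tD]

lemma tD_mul_tD_mul_tD {a b c : Fin n} (hab : a ≠ b) (hac : a ≠ c) (hbc : b ≠ c) :
    tD hn a b hab * tD hn a c hac * tD hn a b hab = pD hn (Equiv.swap b c) := by
  obtain ⟨ρ, hρ⟩ := Equiv.Perm.exists_extending_pair
    ![(⟨0, by omega⟩ : Fin n), ⟨1, by omega⟩, ⟨2, by omega⟩] ![a, b, c]
    (by
      intro i j
      fin_cases i <;> fin_cases j <;> simp [Fin.ext_iff])
    (by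
      intro i j
      fin_cases i <;> fin_cases j <;> simp [hab, hac, hbc, hab.symm, hac.symm, hbc.symm])
  obtain rfl : ρ ⟨0, by omega⟩ = a := hρ 0
  obtain rfl : ρ ⟨1, by omega⟩ = b := hρ 1
  obtain rfl : ρ ⟨2, by omega⟩ = c := hρ 2
  have hσS : σD n hn • S12 n hn =
      ⟨{⟨0, by omega⟩, ⟨2, by omega⟩}, Finset.card_pair (by simp [Fin.ext_iff])⟩ := by
    rw [S12, KSub.smul_pair _ (by simp [Fin.ext_iff])]
    simp [σD, Equiv.swap_apply_def, Fin.ext_iff]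
  have base : tD hn ⟨0, by omega⟩ ⟨1, by omega⟩ (by simp [Fin.ext_iff]) *
      tD hn ⟨0, by omega⟩ ⟨2, by omega⟩ (by simp [Fin.ext_iff]) *
      tD hn ⟨0, by omega⟩ ⟨1, by omega⟩ (by simp [Fin.ext_iff]) = pD hn (σD n hn) := by
    have h := TargetGroup.tbar_mul_tbar_smul_mul_tbar (S₀ := S12 n hn) (σ₀ := σD n hn)
      (Equiv.swap_mul_self _ _)
    rw [hσS] at h
    exact h
  have h := congrArg (MulAut.conj (pD hn ρ)) base
  simp only [map_mul, MulAut.conj_apply, pD_mul_tD_mul_inv] at h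
  rw [h, Equiv.swap_apply_apply, map_mul, map_mul, map_inv]
  rfl

lemma tD_mul_tD {a b c : Fin n} (hab : a ≠ b) (hac : a ≠ c) (hbc : b ≠ c) :
    tD hn a b hab * tD hn a c hac = pD hn (Equiv.swap b c) * tD hn a b hab := by
  rw [← tD_mul_tD_mul_tD hn hab hac hbc, mul_assoc _ (tD hn a b hab), tD_mul_self, mul_one]

lemma tD_mul_tD_eq_pD_mul {a b c d : Fin n} (hab : a ≠ b) (hac : a ≠ c) (had : a ≠ d)
    (hbc : b ≠ c) (hbd : b ≠ d) (hcd : c ≠ d) :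
    tD hn a b hab * tD hn c d hcd =
      pD hn (Equiv.swap b c * Equiv.swap a d) * (tD hn a c hac * tD hn b d hbd) := by
  have hcd_bd : tD hn c d hcd * tD hn b d hbd = pD hn (Equiv.swap b c) * tD hn c d hcd := by
    rw [tD_comm hn c d, tD_comm hn b d, Equiv.swap_comm]
    exact tD_mul_tD hn hcd.symm hbd.symm hbc.symm
  have hac_cd : tD hn a c hac * tD hn c d hcd = pD hn (Equiv.swap a d) * tD hn a c hac := by
    rw [tD_comm hn a c]
    exact tD_mul_tD hn hac.symm hcd had
  have hconj : pD hn (Equiv.swap b c) * tD hn a c hac * (pD hn (Equiv.swap b c))⁻¹ =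
      tD hn a b hab := by
    rw [pD_mul_tD_mul_inv]
    simp only [Equiv.swap_apply_of_ne_of_ne hab hac, Equiv.swap_apply_right]
  have hinv : (pD hn (Equiv.swap b c))⁻¹ = pD hn (Equiv.swap b c) := by
    rw [← map_inv, Equiv.swap_inv]
  calc tD hn a b hab * tD hn c d hcd
      = pD hn (Equiv.swap b c) * tD hn a c hac * (tD hn c d hcd * tD hn b d hbd) := by
        rw [← hconj, hcd_bd, hinv, mul_assoc]
    _ = pD hn (Equiv.swap b c) * (tD hn a c hac * tD hn c d hcd) * tD hn b d hbd := by
        simp only [mul_assoc]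
    _ = pD hn (Equiv.swap b c * Equiv.swap a d) * (tD hn a c hac * tD hn b d hbd) := by
        rw [hac_cd, map_mul]
        simp only [mul_assoc]

end GD

/-- For every `n ≥ 4`, in `G_D(n)` one has
`t_{12}·t_{34} = ((2 3)(1 4))·t_{13}·t_{24}` (written 0-based below); in particular the
double cosets `N·t_{12}t_{34}·N` and `N·t_{13}t_{24}·N` coincide, where `N` is the image of
`Sym(Fin n)` in `G_D(n)`. -/
theorem targetGroup_D_t12_t34_eq (n : ℕ) (hn : 4 ≤ n) :
    tD hn ⟨0, by omega⟩ ⟨1, by omega⟩ (by simp [Fin.ext_iff]) *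
        tD hn ⟨2, by omega⟩ ⟨3, by omega⟩ (by simp [Fin.ext_iff]) =
      pD hn (Equiv.swap ⟨1, by omega⟩ ⟨2, by omega⟩ * Equiv.swap ⟨0, by omega⟩ ⟨3, by omega⟩) *
        (tD hn ⟨0, by omega⟩ ⟨2, by omega⟩ (by simp [Fin.ext_iff]) *
          tD hn ⟨1, by omega⟩ ⟨3, by omega⟩ (by simp [Fin.ext_iff])) ∧
      (((pD hn).range : Set (GD n hn)) *
            {tD hn ⟨0, by omega⟩ ⟨1, by omega⟩ (by simp [Fin.ext_iff]) *
              tD hn ⟨2, by omega⟩ ⟨3, by omega⟩ (by simp [Fin.ext_iff])} *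
            ((pD hn).range : Set (GD n hn)) =
          ((pD hn).range : Set (GD n hn)) *
            {tD hn ⟨0, by omega⟩ ⟨2, by omega⟩ (by simp [Fin.ext_iff]) *
              tD hn ⟨1, by omega⟩ ⟨3, by omega⟩ (by simp [Fin.ext_iff])} *
            ((pD hn).range : Set (GD n hn))) := by
  have h := tD_mul_tD_eq_pD_mul hn (a := ⟨0, by omega⟩) (b := ⟨1, by omega⟩)
    (c := ⟨2, by omega⟩) (d := ⟨3, by omega⟩) (by simp [Fin.ext_iff]) (by simp [Fin.ext_iff])
    (by simp [Fin.ext_iff]) (by simp [Fin.ext_iff]) (by simp [Fin.ext_iff])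
    (by simp [Fin.ext_iff])
  refine ⟨h, ?_⟩
  rw [h, ← Set.singleton_mul_singleton, ← mul_assoc,
    Subgroup.subgroup_mul_singleton (MonoidHom.mem_range.mpr ⟨_, rfl⟩)]
end
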